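/- For every real α with 0 < α ≤ 1/2 and every real c ≥ 6 there exist a constant C > 0 and an integer K such that for all nonnegative integers k₀, k₁ with k := k₀ + k₁ ≥ K and every integer n with 4·k⁶ ≤ n ≤ k^c, there exists an (n, k₀, k₁, α, 1)-mapping family of size at most (1/α)^k · k^{C·k^{5/6}}. -/

import Mathlib

open Finset

/-- An `(n,k₀,k₁,α,β)`-mapping family: every function maps exactly `⌈α·n⌉` elements
to `1`, and for all disjoint `S₀, S₁ ⊆ [n]` with `|S₀| = k₀`, `|S₁| = k₁` some
function maps all of `S₀` to `0` and exactly `⌈β·k₁⌉` elements of `S₁` to `1`. -/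
def IsMappingFamily (n k₀ k₁ : ℕ) (α β : ℝ) (F : Finset (Fin n → Fin 2)) : Prop :=
  (∀ f ∈ F, (Finset.univ.filter fun x => f x = 1).card = ⌈α * (n : ℝ)⌉₊) ∧
  ∀ S₀ S₁ : Finset (Fin n), Disjoint S₀ S₁ → S₀.card = k₀ → S₁.card = k₁ →
    ∃ f ∈ F, (∀ x ∈ S₀, f x = 0) ∧
      (S₁.filter fun x => f x = 1).card = ⌈β * (k₁ : ℝ)⌉₊

/-!
Take `m = ⌈αn⌉` and look for the family among the indicator functions of `m`-subsets `A` of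
`[n]`. A pair `(S₀, S₁)` is served by `A` iff `S₁ ⊆ A` and `S₀ ∩ A = ∅`; this happens for a
fraction `C(n-k, m-k₁) / C(n, m) ≥ ((m-k)/n)^k ≥ α^k/2` of all `A` as soon as `αn ≥ 2k²`.
By averaging, some `A` serves an `α^k/2` fraction of the pairs not served yet; adding such sets one
at a time multiplies the number of unserved pairs by `1 - α^k/2 ≤ exp (-α^k/2)` at every step, so
`t ≈ 2k log n / α^k` sets serve all of the at most `n^k` pairs. Finally `k log n ≤ c k log k`, which is far below `k^(3 k^(5/6))`.
-/

section Cover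

variable {ι κ : Type*} {Ω : Finset ι} {P : Finset κ} {cov : ι → κ → Prop}
  [∀ a x, Decidable (cov a x)] {p : ℝ}

lemma exists_card_filter_not_le (hΩ : Ω.Nonempty)
    (hcov : ∀ x ∈ P, p * #Ω ≤ #{a ∈ Ω | cov a x}) :
    ∃ a ∈ Ω, (#{x ∈ P | ¬cov a x} : ℝ) ≤ (1 - p) * #P := by
  refine exists_le_of_sum_le hΩ ?_
  calc ∑ a ∈ Ω, (#{x ∈ P | ¬cov a x} : ℝ) = ∑ x ∈ P, (#{a ∈ Ω | ¬cov a x} : ℝ) := by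
        simp only [card_filter, Nat.cast_sum]
        exact sum_comm
    _ ≤ ∑ x ∈ P, (1 - p) * #Ω := sum_le_sum fun x hx => by
        have hsplit := card_filter_add_card_filter_not (s := Ω) (fun a => cov a x)
        have hx' := hcov x hx
        rw [← hsplit] at hx' ⊢
        push_cast at hx' ⊢
        linarith
    _ = ∑ a ∈ Ω, (1 - p) * #P := by simp only [sum_const, nsmul_eq_mul]; ring

lemma exists_card_filter_forall_not_le [DecidableEq ι] (hΩ : Ω.Nonempty) (hp : p ≤ 1)
    (hcov : ∀ x ∈ P, p * #Ω ≤ #{a ∈ Ω | cov a x}) (t : ℕ) :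
    ∃ G ⊆ Ω, #G ≤ t ∧ (#{x ∈ P | ∀ a ∈ G, ¬cov a x} : ℝ) ≤ (1 - p) ^ t * #P := by
  induction t with
  | zero => exact ⟨∅, empty_subset _, le_rfl, by simp⟩
  | succ t ih =>
    obtain ⟨G, hGΩ, hGt, hG⟩ := ih
    obtain ⟨a, haΩ, ha⟩ := exists_card_filter_not_le (P := {x ∈ P | ∀ a ∈ G, ¬cov a x}) hΩ
      fun x hx => hcov x (mem_filter.1 hx).1
    refine ⟨insert a G, insert_subset haΩ hGΩ, (card_insert_le _ _).trans (by omega), ?_⟩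
    have hfilter : {x ∈ P | ∀ b ∈ insert a G, ¬cov b x} =
        {x ∈ {x ∈ P | ∀ b ∈ G, ¬cov b x} | ¬cov a x} := by
      rw [filter_filter]
      simp only [forall_mem_insert, and_comm]
    rw [hfilter, pow_succ, mul_comm _ (1 - p), mul_assoc]
    exact ha.trans (mul_le_mul_of_nonneg_left hG (by linarith))

lemma exists_cover_of_card_lt_exp [DecidableEq ι] (hΩ : Ω.Nonempty) (hp : p ≤ 1)
    (hcov : ∀ x ∈ P, p * #Ω ≤ #{a ∈ Ω | cov a x}) (t : ℕ) (ht : (#P : ℝ) < Real.exp (p * t)) :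
    ∃ G ⊆ Ω, #G ≤ t ∧ ∀ x ∈ P, ∃ a ∈ G, cov a x := by
  obtain ⟨G, hGΩ, hGt, hG⟩ := exists_card_filter_forall_not_le hΩ hp hcov t
  refine ⟨G, hGΩ, hGt, fun x hx => ?_⟩
  by_contra! hx'
  have huncovered : (1 : ℝ) ≤ #{x ∈ P | ∀ a ∈ G, ¬cov a x} := by
    exact_mod_cast card_pos.2 ⟨x, mem_filter.2 ⟨hx, hx'⟩⟩
  have hsmall : (1 - p) ^ t * #P < 1 :=
    calc (1 - p) ^ t * #P ≤ Real.exp (-p) ^ t * #P := by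
          gcongr
          linarith [Real.add_one_le_exp (-p)]
      _ < Real.exp (-p) ^ t * Real.exp (p * t) := by gcongr
      _ = 1 := by rw [← Real.exp_nat_mul, ← Real.exp_add]; ring_nf; simp
  linarith

end Cover

lemma card_filter_powersetCard_subset_disjoint {α : Type*} [Fintype α] [DecidableEq α]
    {S₀ S₁ : Finset α} (h : Disjoint S₀ S₁) {m : ℕ} (hm : #S₁ ≤ m) :
    #{A ∈ powersetCard m (univ : Finset α) | S₁ ⊆ A ∧ Disjoint S₀ A} =
      (Fintype.card α - #S₀ - #S₁).choose (m - #S₁) := by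
  have hfilter : {A ∈ powersetCard m (univ : Finset α) | S₁ ⊆ A ∧ Disjoint S₀ A} =
      {A ∈ powersetCard m S₀ᶜ | S₁ ⊆ A} := by
    ext A
    simp only [mem_filter, mem_powersetCard, subset_univ, true_and,
      ← subset_compl_iff_disjoint_left]
    tauto
  rw [hfilter, card_filter_powersetCard_subset _ _ _ (subset_compl_iff_disjoint_left.2 h) hm,
    card_compl]

namespace Nat

-- Both sides count the triples `S₁ ⊆ A`, `S₀ ⊆ Aᶜ` with `#A = m`, `#S₁ = k₁`, `#S₀ = k₀`.
lemma choose_mul_choose_mul_choose {n m k₀ k₁ : ℕ} (hk₁ : k₁ ≤ m) (hk₀ : k₀ + m ≤ n) :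
    n.choose m * m.choose k₁ * (n - m).choose k₀ =
      n.choose k₁ * (n - k₁).choose k₀ * (n - k₀ - k₁).choose (m - k₁) := by
  rw [choose_mul hk₁, choose_symm_of_eq_add (show n - k₁ = (m - k₁) + (n - m) by omega),
    mul_assoc, choose_mul (show k₀ ≤ n - m by omega),
    choose_symm_of_eq_add (show n - k₁ - k₀ = (n - m - k₀) + (m - k₁) by omega),
    show n - k₁ - k₀ = n - k₀ - k₁ by omega, mul_assoc]

lemma pow_mul_choose_le_pow_mul_choose {n m k₀ k₁ q : ℕ} (hq₁ : q ≤ m + 1 - k₁)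
    (hq₀ : q ≤ n - m + 1 - k₀) :
    q ^ (k₀ + k₁) * n.choose m ≤ n ^ (k₀ + k₁) * (n - k₀ - k₁).choose (m - k₁) := by
  rcases lt_or_ge n m with hnm | hmn
  · simp [choose_eq_zero_of_lt hnm]
  by_cases hk : m < k₁ ∨ n - m < k₀
  · rw [show q = 0 by omega, zero_pow (by omega), zero_mul]
    exact Nat.zero_le _
  simp only [not_or, not_lt] at hk
  calc q ^ (k₀ + k₁) * n.choose m = n.choose m * (q ^ k₁ * q ^ k₀) := by ring
    _ ≤ n.choose m * (m.descFactorial k₁ * (n - m).descFactorial k₀) := by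
        gcongr
        · exact (pow_le_pow_left' hq₁ k₁).trans (pow_sub_le_descFactorial m k₁)
        · exact (pow_le_pow_left' hq₀ k₀).trans (pow_sub_le_descFactorial (n - m) k₀)
    _ = k₁ ! * k₀ ! * (n.choose m * m.choose k₁ * (n - m).choose k₀) := by
        simp only [descFactorial_eq_factorial_mul_choose]
        ring
    _ = (n - k₁).descFactorial k₀ * n.descFactorial k₁ * (n - k₀ - k₁).choose (m - k₁) := by
        rw [choose_mul_choose_mul_choose hk.1 (by omega)]
        simp only [descFactorial_eq_factorial_mul_choose]
        ring
    _ ≤ n ^ (k₀ + k₁) * (n - k₀ - k₁).choose (m - k₁) := by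
        rw [← add_tsub_cancel_right k₀ k₁, descFactorial_mul_descFactorial (le_add_self),
          add_tsub_cancel_right]
        gcongr
        exact descFactorial_le_pow n _

end Nat

lemma pow_le_two_mul_sub_pow {x : ℝ} {k : ℕ} (h : 2 * k ^ 2 ≤ x) : x ^ k ≤ 2 * (x - k) ^ k := by
  rcases k.eq_zero_or_pos with rfl | hk
  · norm_num
  have hk1 : (1 : ℝ) ≤ k := by exact_mod_cast hk
  have hx : 0 < x := by nlinarith
  have hsq : (k : ℝ) ^ 2 / x ≤ 1 / 2 := by rw [div_le_iff₀ hx]; linarith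
  have hbern := one_add_mul_le_pow (a := -(k / x)) (by
    rw [neg_le_neg_iff, div_le_iff₀ hx]; nlinarith) k
  calc x ^ k = 2 * (x ^ k * (1 / 2)) := by ring
    _ ≤ 2 * (x ^ k * (1 + -(k / x)) ^ k) := by
        gcongr
        refine le_trans ?_ hbern
        rw [mul_neg, ← mul_div_assoc, ← sq]
        linarith
    _ = 2 * (x - k) ^ k := by rw [← mul_pow]; congr 2; field_simp; ring

lemma natCast_le_of_two_mul_sq_le {k : ℕ} {x : ℝ} (h : 2 * (k : ℝ) ^ 2 ≤ x) : (k : ℝ) ≤ x := by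
  rcases k.eq_zero_or_pos with hk | hk
  · simp only [hk, Nat.cast_zero] at h ⊢; linarith
  · nlinarith [show (1 : ℝ) ≤ k by exact_mod_cast hk]

lemma pow_mul_choose_ceil_le_two_mul_choose {n k₀ k₁ : ℕ} {α : ℝ} (hα : α ≤ 1 / 2)
    (hn : 2 * ((k₀ + k₁ : ℕ) : ℝ) ^ 2 ≤ α * n) :
    α ^ (k₀ + k₁) * n.choose ⌈α * n⌉₊ ≤ 2 * (n - k₀ - k₁).choose (⌈α * n⌉₊ - k₁) := by
  set k := k₀ + k₁
  set m := ⌈α * n⌉₊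
  have hm : α * n ≤ m := Nat.le_ceil _
  have hm' : (m : ℝ) < α * n + 1 := Nat.ceil_lt_add_one (by nlinarith)
  have hkn : (k : ℝ) ≤ α * n := natCast_le_of_two_mul_sq_le hn
  have hkm : k ≤ m := Nat.cast_le.1 (hkn.trans hm)
  have h2m : 2 * m ≤ n + 1 := by
    have : (2 * m : ℝ) < n + 2 := by nlinarith
    have : 2 * m < n + 2 := by exact_mod_cast this
    omega
  have hq : α * n - k ≤ ((m - k : ℕ) : ℝ) := by push_cast [hkm]; linarith
  have hcount := Nat.pow_mul_choose_le_pow_mul_choose (n := n) (m := m) (k₀ := k₀) (k₁ := k₁)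
    (q := m - k) (by omega) (by omega)
  have hpos : 0 < (n : ℝ) ^ k := by
    rcases k.eq_zero_or_pos with hk | hk
    · simp [hk]
    · have : (1 : ℝ) ≤ k := by exact_mod_cast hk
      exact pow_pos (by nlinarith) _
  refine le_of_mul_le_mul_left ?_ hpos
  calc (n : ℝ) ^ k * (α ^ k * n.choose m) = (α * n) ^ k * n.choose m := by ring
    _ ≤ 2 * (α * n - k) ^ k * n.choose m := by gcongr; exact pow_le_two_mul_sub_pow hn
    _ ≤ 2 * ((m - k : ℕ) : ℝ) ^ k * n.choose m := by gcongr
    _ ≤ 2 * ((n : ℝ) ^ k * (n - k₀ - k₁).choose (m - k₁)) := by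
        rw [mul_assoc]; exact_mod_cast Nat.mul_le_mul_left 2 hcount
    _ = (n : ℝ) ^ k * (2 * (n - k₀ - k₁).choose (m - k₁)) := by ring

lemma isMappingFamily_image_indicator {n k₀ k₁ : ℕ} {α : ℝ} {G : Finset (Finset (Fin n))}
    (hG : ∀ A ∈ G, #A = ⌈α * n⌉₊)
    (hcov : ∀ S₀ S₁ : Finset (Fin n), Disjoint S₀ S₁ → #S₀ = k₀ → #S₁ = k₁ →
      ∃ A ∈ G, S₁ ⊆ A ∧ Disjoint S₀ A) :
    IsMappingFamily n k₀ k₁ α 1 (G.image fun A x => if x ∈ A then 1 else 0) := by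
  have hfilter (A s : Finset (Fin n)) :
      {x ∈ s | (if x ∈ A then 1 else 0 : Fin 2) = 1} = s ∩ A := by
    ext x
    by_cases hx : x ∈ A <;> simp [hx]
  refine ⟨?_, fun S₀ S₁ hd h₀ h₁ => ?_⟩
  · simp only [mem_image, forall_exists_index, and_imp, forall_apply_eq_imp_iff₂]
    intro A hA
    rw [hfilter, univ_inter, hG A hA]
  · obtain ⟨A, hA, hS₁A, hS₀A⟩ := hcov S₀ S₁ hd h₀ h₁
    refine ⟨_, mem_image_of_mem _ hA, fun x hx => by simp [disjoint_left.1 hS₀A hx], ?_⟩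
    rw [hfilter, inter_eq_left.2 hS₁A, h₁, one_mul, Nat.ceil_natCast]

theorem exists_isMappingFamily_card_le {n k₀ k₁ t : ℕ} {α : ℝ} (hα₀ : 0 < α) (hα : α ≤ 1 / 2)
    (hn : 2 * ((k₀ + k₁ : ℕ) : ℝ) ^ 2 ≤ α * n)
    (ht : (n : ℝ) ^ (k₀ + k₁) < Real.exp (α ^ (k₀ + k₁) / 2 * t)) :
    ∃ F, IsMappingFamily n k₀ k₁ α 1 F ∧ #F ≤ t := by
  set P := (powersetCard k₀ (univ : Finset (Fin n)) ×ˢ powersetCard k₁ univ).filter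
    fun S => Disjoint S.1 S.2
  have hP : (#P : ℝ) ≤ n ^ (k₀ + k₁) := by
    have : #P ≤ n ^ (k₀ + k₁) := calc
      #P ≤ n.choose k₀ * n.choose k₁ := by
        simpa using card_filter_le (powersetCard k₀ univ ×ˢ powersetCard k₁ univ)
          fun S : Finset (Fin n) × Finset (Fin n) => Disjoint S.1 S.2
      _ ≤ n ^ (k₀ + k₁) := by
        rw [pow_add]; exact Nat.mul_le_mul (Nat.choose_le_pow _ _) (Nat.choose_le_pow _ _)
    exact_mod_cast this
  have hΩ : (powersetCard ⌈α * n⌉₊ (univ : Finset (Fin n))).Nonempty := by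
    rw [powersetCard_nonempty, card_univ, Fintype.card_fin]
    exact Nat.ceil_le.2 (by nlinarith [(n.cast_nonneg : (0 : ℝ) ≤ n)])
  have hcov (S) (hS : S ∈ P) :
      α ^ (k₀ + k₁) / 2 * #(powersetCard ⌈α * n⌉₊ (univ : Finset (Fin n))) ≤
      #{A ∈ powersetCard ⌈α * n⌉₊ (univ : Finset (Fin n)) | S.2 ⊆ A ∧ Disjoint S.1 A} := by
    simp only [P, mem_filter, mem_product, mem_powersetCard, subset_univ, true_and] at hS
    obtain ⟨⟨h₀, h₁⟩, hd⟩ := hS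
    have hm : k₁ ≤ ⌈α * n⌉₊ := (Nat.cast_le.1 ((natCast_le_of_two_mul_sq_le hn).trans
      (Nat.le_ceil _))).trans' (by omega)
    rw [card_filter_powersetCard_subset_disjoint hd (h₁ ▸ hm), card_powersetCard, card_univ,
      Fintype.card_fin, h₀, h₁]
    linarith [pow_mul_choose_ceil_le_two_mul_choose (k₀ := k₀) (k₁ := k₁) hα hn]
  have hp : α ^ (k₀ + k₁) / 2 ≤ 1 := by
    linarith [pow_le_one₀ hα₀.le (show α ≤ 1 by linarith) (n := k₀ + k₁)]
  obtain ⟨G, hGΩ, hGt, hG⟩ := exists_cover_of_card_lt_exp hΩ hp hcov t (hP.trans_lt ht)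
  refine ⟨_, isMappingFamily_image_indicator (fun A hA => (mem_powersetCard.1 (hGΩ hA)).2)
    (fun S₀ S₁ hd h₀ h₁ => hG (S₀, S₁) ?_), card_image_le.trans hGt⟩
  simp [P, hd, h₀, h₁]

lemma exists_isMappingFamily_card_le_mul_log {n k₀ k₁ : ℕ} {α : ℝ} (hα₀ : 0 < α)
    (hα : α ≤ 1 / 2) (hn₀ : 0 < n) (hn : 2 * ((k₀ + k₁ : ℕ) : ℝ) ^ 2 ≤ α * n) :
    ∃ F, IsMappingFamily n k₀ k₁ α 1 F ∧
      (#F : ℝ) ≤ (1 / α) ^ (k₀ + k₁) * (2 * (k₀ + k₁ : ℕ) * Real.log n) + 1 := by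
  set k := k₀ + k₁
  have hp : 0 < α ^ k / 2 := by positivity
  have hn₀' : (0 : ℝ) < n := by exact_mod_cast hn₀
  set t := ⌊k * Real.log n / (α ^ k / 2)⌋₊ + 1
  have ht : k * Real.log n < α ^ k / 2 * t := by
    rw [← div_lt_iff₀' hp]; exact_mod_cast Nat.lt_floor_add_one (k * Real.log n / (α ^ k / 2))
  obtain ⟨F, hF, hFt⟩ := exists_isMappingFamily_card_le hα₀ hα hn (t := t) (by
    rwa [← Real.exp_log hn₀', ← Real.exp_nat_mul, Real.exp_lt_exp])
  refine ⟨F, hF, ?_⟩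
  have hlog : 0 ≤ Real.log n := Real.log_nonneg (by exact_mod_cast hn₀)
  calc (#F : ℝ) ≤ t := by exact_mod_cast hFt
    _ ≤ k * Real.log n / (α ^ k / 2) + 1 := by
        push_cast [t]
        gcongr
        exact Nat.floor_le (by positivity)
    _ = (1 / α) ^ k * (2 * k * Real.log n) + 1 := by rw [div_pow, one_pow]; field_simp

lemma two_mul_mul_log_add_one_le_rpow {n k M : ℕ} {c : ℝ} (hn : 0 < n) (hnc : (n : ℝ) ≤ k ^ c)
    (hcM : c ≤ M) (hk : 2 * M + 1 ≤ k) :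
    2 * k * Real.log n + 1 ≤ (k : ℝ) ^ (3 * (k : ℝ) ^ ((5 : ℝ) / 6)) := by
  have hk₁ : (1 : ℝ) ≤ k := by exact_mod_cast (show 1 ≤ k by omega)
  have hkM : 2 * (M : ℝ) + 1 ≤ k := by exact_mod_cast hk
  have hlogn : Real.log n ≤ M * k := by
    calc Real.log n ≤ c * Real.log k := by
          rw [← Real.log_rpow (by positivity)]
          exact Real.log_le_log (by exact_mod_cast hn) hnc
      _ ≤ M * k :=
          mul_le_mul hcM (Real.log_le_self (by positivity)) (Real.log_nonneg hk₁) (by positivity)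
  have hcube : 2 * k * Real.log n + 1 ≤ (k : ℝ) ^ 3 := by
    nlinarith [mul_le_mul_of_nonneg_left hlogn (by positivity : (0 : ℝ) ≤ 2 * k),
      mul_le_mul_of_nonneg_right hkM (sq_nonneg (k : ℝ))]
  refine hcube.trans ?_
  rw [← Real.rpow_natCast]
  exact Real.rpow_le_rpow_of_exponent_le hk₁
    (by norm_num; exact Real.one_le_rpow hk₁ (by norm_num))

theorem mapping_family_poly_universe_general (α : ℝ) (hα0 : 0 < α) (hα1 : α ≤ 1 / 2)
    (c : ℝ) :
    ∃ C : ℝ, 0 < C ∧ ∃ K : ℕ, ∀ k₀ k₁ : ℕ, K ≤ k₀ + k₁ →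
      ∀ n : ℕ, 4 * (k₀ + k₁) ^ 6 ≤ n → (n : ℝ) ≤ ((k₀ + k₁ : ℕ) : ℝ) ^ c →
      ∃ F : Finset (Fin n → Fin 2),
        IsMappingFamily n k₀ k₁ α 1 F ∧
          (F.card : ℝ) ≤
            (1 / α) ^ (k₀ + k₁) *
              ((k₀ + k₁ : ℕ) : ℝ) ^
                (C * ((k₀ + k₁ : ℕ) : ℝ) ^ ((5 : ℝ) / 6)) := by
  obtain ⟨A, hA⟩ := exists_nat_ge α⁻¹
  obtain ⟨M, hM⟩ := exists_nat_ge c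
  refine ⟨3, by norm_num, max A (2 * M + 1), fun k₀ k₁ hK n hn hnc => ?_⟩
  set k := k₀ + k₁
  have hk : (1 : ℝ) ≤ k := by exact_mod_cast (show 1 ≤ k by omega)
  have hαk : 1 ≤ α * k := by
    rw [← inv_le_iff_one_le_mul₀' hα0]
    exact hA.trans (by exact_mod_cast (show A ≤ k by omega))
  have hnk : 4 * (k : ℝ) ^ 6 ≤ n := by exact_mod_cast hn
  have hαn : 2 * (k : ℝ) ^ 2 ≤ α * n := by
    nlinarith [pow_le_pow_right₀ hk (show 2 ≤ 5 by norm_num)]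
  have hn₀ : 0 < n := by exact_mod_cast (show (0 : ℝ) < n by nlinarith)
  obtain ⟨F, hF, hFcard⟩ := exists_isMappingFamily_card_le_mul_log hα0 hα1 hn₀ hαn
  refine ⟨F, hF, hFcard.trans ?_⟩
  have hα : 1 ≤ (1 / α) ^ k := one_le_pow₀ (by rw [le_div_iff₀ hα0]; linarith)
  calc (1 / α) ^ k * (2 * k * Real.log n) + 1
      ≤ (1 / α) ^ k * (2 * k * Real.log n + 1) := by linarith
    _ ≤ _ := by gcongr; exact two_mul_mul_log_add_one_le_rpow hn₀ hnc hM (by omega)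

/-- For every `0 < α ≤ 1/2` and `c ≥ 6` there are `C > 0` and `K` such that for all
`k₀, k₁` with `k := k₀ + k₁ ≥ K` and all `n` with `4·k⁶ ≤ n ≤ k^c`, there is an
`(n,k₀,k₁,α,1)`-mapping family of size at most `(1/α)^k · k^{C·k^{5/6}}`. -/
theorem mapping_family_poly_universe (α : ℝ) (hα0 : 0 < α) (hα1 : α ≤ 1 / 2)
    (c : ℝ) (hc : 6 ≤ c) :
    ∃ C : ℝ, 0 < C ∧ ∃ K : ℕ, ∀ k₀ k₁ : ℕ, K ≤ k₀ + k₁ →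
      ∀ n : ℕ, 4 * (k₀ + k₁) ^ 6 ≤ n → (n : ℝ) ≤ ((k₀ + k₁ : ℕ) : ℝ) ^ c →
      ∃ F : Finset (Fin n → Fin 2),
        IsMappingFamily n k₀ k₁ α 1 F ∧
          (F.card : ℝ) ≤
            (1 / α) ^ (k₀ + k₁) *
              ((k₀ + k₁ : ℕ) : ℝ) ^
                (C * ((k₀ + k₁ : ℕ) : ℝ) ^ ((5 : ℝ) / 6)) :=
  mapping_family_poly_universe_general α hα0 hα1 c
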